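/- In the Neveu-Schwarz-Block module Ω_L(λ, a, b), the mixed commutator relation on the even part holds: L_{m,i}G_{l,j}f(t) - G_{l,j}L_{m,i}f(t) = (l(i+q) - m(j + q/2)) λ^{m+l-1/2} δ_{i+j,0} f(x - (l+m)q), equal to (l(i+q) - m(j+q/2)) G_{m+l,i+j}f(t), for all m ∈ ℤ, l ∈ 1/2 + ℤ, i, j ∈ ℤ₊, f ∈ ℂ[t]. -/
import Mathlib


open Polynomial

/-- Action (4.1) of `L_{m,i}` on the even part `ℂ[t]` of `Ω_L(λ,a,b)`. -/
noncomputable def LeL (q lam a b : ℂ) (m : ℤ) (i : ℕ) (f : Polynomial ℂ) : Polynomial ℂ :=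
  lam ^ m • (((if i = 0 then X - C ((m : ℂ) * q * a) else 0) +
      (if q = -1 ∧ i = 1 then C b else 0)) * f.comp (X - C ((m : ℂ) * q)))

/-- Action (4.2) of `L_{m,i}` on the odd part `ℂ[x]` of `Ω_L(λ,a,b)`. -/
noncomputable def LoL (q lam a b : ℂ) (m : ℤ) (i : ℕ) (g : Polynomial ℂ) : Polynomial ℂ :=
  lam ^ m • (((if i = 0 then X - C ((m : ℂ) * q * a + (m : ℂ) * q / 2) else 0) +
      (if q = -1 ∧ i = 1 then C b else 0)) * g.comp (X - C ((m : ℂ) * q)))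

/-- Action (4.3) of `G_{r,i}` (with `r = k + 1/2`, encoded by `k ∈ ℤ`) sending the even
part `ℂ[t]` to the odd part `ℂ[x]`: `G_{r,i} f(t) = λ^{r-1/2} δ_{i,0} f(x - rq)`. -/
noncomputable def GeoL (q lam : ℂ) (k : ℤ) (i : ℕ) (f : Polynomial ℂ) : Polynomial ℂ :=
  lam ^ k • (if i = 0 then f.comp (X - C (((k : ℂ) + 1 / 2) * q)) else 0)

/-- Action (4.4) of `G_{r,i}` (with `r = k + 1/2`, encoded by `k ∈ ℤ`) sending the odd
part `ℂ[x]` to the even part `ℂ[t]`: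
`G_{r,i} g(x) = qλ^{r+1/2}(δ_{i,0}(t - 2rqa) + 2δ_{q,-1}δ_{i,1}b) g(t - rq)`. -/
noncomputable def GoeL (q lam a b : ℂ) (k : ℤ) (i : ℕ) (g : Polynomial ℂ) : Polynomial ℂ :=
  (q * lam ^ (k + 1)) •
    (((if i = 0 then X - C (2 * ((k : ℂ) + 1 / 2) * q * a) else 0) +
      (if q = -1 ∧ i = 1 then C (2 * b) else 0)) * g.comp (X - C (((k : ℂ) + 1 / 2) * q)))

/-- In `Ω_L(λ,a,b)` the mixed commutator relation on the even part holds (with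
`l = k + 1/2` encoded by `k ∈ ℤ`):
`L_{m,i}G_{l,j}f - G_{l,j}L_{m,i}f = (l(i+q) - m(j+q/2)) λ^{m+l-1/2} δ_{i+j,0} f(x - (l+m)q)
  = (l(i+q) - m(j+q/2)) G_{m+l,i+j} f`. -/
theorem OmegaL_even_LG_commutator (q lam a b : ℂ) (hq : q ≠ 0) (hlam : lam ≠ 0)
    (m : ℤ) (k : ℤ) (i j : ℕ) (f : Polynomial ℂ) :
    LoL q lam a b m i (GeoL q lam k j f) - GeoL q lam k j (LeL q lam a b m i f) =
      (((k : ℂ) + 1 / 2) * ((i : ℂ) + q) - (m : ℂ) * ((j : ℂ) + q / 2)) •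
        (lam ^ (m + k) •
          (if i + j = 0 then
            f.comp (X - C ((((k : ℂ) + 1 / 2) + (m : ℂ)) * q)) else 0)) ∧
    LoL q lam a b m i (GeoL q lam k j f) - GeoL q lam k j (LeL q lam a b m i f) =
      (((k : ℂ) + 1 / 2) * ((i : ℂ) + q) - (m : ℂ) * ((j : ℂ) + q / 2)) •
        GeoL q lam (m + k) (i + j) f := by

  have key : LoL q lam a b m i (GeoL q lam k j f) - GeoL q lam k j (LeL q lam a b m i f) =
      (((k : ℂ) + 1 / 2) * ((i : ℂ) + q) - (m : ℂ) * ((j : ℂ) + q / 2)) •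
        (lam ^ (m + k) •
          (if i + j = 0 then
            f.comp (X - C ((((k : ℂ) + 1 / 2) + (m : ℂ)) * q)) else 0)) := by
    by_cases hj : j = 0
    · subst hj
      by_cases hi : i = 0
      · subst hi
        simp only [LoL, GeoL, LeL, if_pos rfl, Nat.add_zero, Nat.cast_zero]
        have h1 : (¬ (q = -1 ∧ (0:ℕ) = 1)) := by simp
        simp only [if_neg h1, add_zero, if_true, smul_comp, sub_comp, X_comp, C_comp, mul_comp,
          Polynomial.comp_assoc, smul_smul, smul_mul_assoc, mul_smul_comm, ← zpow_add₀ hlam]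
        have e1 : X - C (((k:ℂ) + 1 / 2) * q) - C ((m:ℂ) * q)
            = X - C (((k:ℂ) + 1/2 + (m:ℂ)) * q) := by
          rw [sub_sub, ← C_add]; congr 1; ring
        have e2 : X - C ((m:ℂ) * q) - C (((k:ℂ) + 1 / 2) * q)
            = X - C (((k:ℂ) + 1/2 + (m:ℂ)) * q) := by
          rw [sub_sub, ← C_add]; congr 1; ring
        rw [e1, e2, show k + m = m + k from add_comm k m]
        rw [← smul_sub, ← sub_mul]
        rw [show X - C ((m:ℂ) * q * a + (m:ℂ) * q / 2) -
            (X - C (((k:ℂ) + 1 / 2) * q) - C ((m:ℂ) * q * a)) =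
            C (((k:ℂ) + 1 / 2) * q) + C ((m:ℂ) * q * a) - C ((m:ℂ) * q * a + (m:ℂ) * q / 2)
          from by ring, ← C_add, ← C_sub,
          show (((k:ℂ) + 1 / 2) * q + (m:ℂ) * q * a - ((m:ℂ) * q * a + (m:ℂ) * q / 2))
            = (((k:ℂ) + 1 / 2) * ((0:ℂ) + q) - (m:ℂ) * ((0:ℂ) + q / 2)) from by ring]
        rw [← Polynomial.smul_eq_C_mul, mul_smul, smul_comm]
      · have hij : ¬ (i + 0 = 0) := by simpa using hi
        simp only [LoL, GeoL, LeL, if_pos rfl, if_neg hi, if_neg hij, zero_add, smul_zero,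
          smul_comp, mul_comp, add_comp, sub_comp, X_comp, C_comp, zero_comp,
          Polynomial.comp_assoc, smul_smul, smul_mul_assoc, mul_smul_comm]
        by_cases hq1 : q = -1 ∧ i = 1
        · simp only [if_pos hq1, if_true, C_comp, smul_smul]
          rw [sub_eq_zero, mul_comm (lam ^ k) (lam ^ m)]
          congr 1
          rw [Polynomial.comp_assoc]
          congr 2
          simp only [sub_comp, X_comp, C_comp]
          ring
        · simp [if_neg hq1]
    · have hj' : ¬ (i + j = 0) := by omega
      simp [LoL, GeoL, LeL, if_neg hj, if_neg hj', hj]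
  have hG : GeoL q lam (m+k) (i+j) f =
      lam ^ (m+k) • (if i + j = 0 then
        f.comp (X - C ((((k:ℂ) + 1/2) + (m:ℂ)) * q)) else 0) := by
    unfold GeoL
    congr 1
    by_cases h : i + j = 0
    · rw [if_pos h, if_pos h]
      congr 3
      push_cast
      ring
    · rw [if_neg h, if_neg h]
  exact ⟨key, by rw [key, hG]⟩
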